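/- arXiv:0808.2440 — 3 statements merged into one kernel-verified Lean document; each statement's English description precedes it below -/
import Mathlib

section
/- Let QH = H ⊗ Λ where H is a graded Z/2-vector space with H_i ≅ Z/2 for 0 ≤ i ≤ n and H_i = 0 otherwise, and Λ = Z/2[t,t⁻¹] with deg t = -(n+1). Suppose QH carries an associative graded product of degree -n with unit α_n (the generator in degree n), such that the generator α_{n-1} ∈ QH_{n-1} satisfies α_{n-1} * α_{n-1} = α_{n-2} and such that α_{n-2} is invertible. Then α_{n-1} is invertible and for all i, j ∈ Z the generators satisfy α_i * α_j = α_{i+j-n}, where α_{i-(n+1)k} := α_i t^k. -/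
/-!
As every graded piece is spanned by `α i`, a product `α i * α j` is either `0` or
`α (i + j - n)`, and `(α i * α j) * α k ≠ 0` holds exactly when both products along the way
are generators. Associativity thus relates "`α i * α j = α (i + j - n)`" for triples of degrees.
From `α (n-1) * α (n-1) = α (n-2)` and the invertibility of `α (n-2)` one gets
`α (n+1) * α (n-1) = α n`, and then right multiplication by `α (n+1)` and by `α (n-1)` is
seen to keep products of generators equal to generators, which reaches every pair of degrees
from the unit `α n`.
-/

noncomputable section

/-- transport along an equality of degrees. -/
def gcast {A : ℤ → Type} [∀ i, AddCommGroup (A i)] [∀ i, Module (ZMod 2) (A i)]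
    {i j : ℤ} (h : i = j) : A i →ₗ[ZMod 2] A j := by subst h; exact LinearMap.id

section GradedGenerators

variable {A : ℤ → Type} [∀ i, AddCommGroup (A i)] [∀ i, Module (ZMod 2) (A i)]

theorem gcast_apply_section (f : ∀ i, A i) {i j : ℤ} (h : i = j) : gcast h (f i) = f j := by
  subst h; rfl

theorem gcast_eq_zero_iff {i j : ℤ} (h : i = j) (x : A i) : gcast h x = 0 ↔ x = 0 := by
  subst h; rfl

variable {n : ℤ} (mul : ∀ i j, A i →ₗ[ZMod 2] A j →ₗ[ZMod 2] A (i + j - n)) (α : ∀ i, A i)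

def MulGenEq (i j : ℤ) : Prop := mul i j (α i) (α j) = α (i + j - n)

variable {mul α}

theorem MulGenEq.congr {i i' j j' : ℤ} (hi : i = i') (hj : j = j') (h : MulGenEq mul α i j) :
    MulGenEq mul α i' j' := by
  subst hi hj; exact h

section OneDimensional

variable (hα : ∀ i, α i ≠ 0) (hdim : ∀ i, ∀ x : A i, x = 0 ∨ x = α i)
include hα hdim

theorem mulGenEq_iff_ne_zero {i j : ℤ} : MulGenEq mul α i j ↔ mul i j (α i) (α j) ≠ 0 :=
  ⟨fun h => h ▸ hα _, (hdim _ _).resolve_left⟩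

theorem mul_apply_gen_ne_zero_iff {p k : ℤ} (x : A p) :
    mul p k x (α k) ≠ 0 ↔ x ≠ 0 ∧ MulGenEq mul α p k := by
  rcases hdim p x with rfl | rfl
  · simp
  · simp [hα, mulGenEq_iff_ne_zero hα hdim]

theorem mul_gen_apply_ne_zero_iff {i q : ℤ} (y : A q) :
    mul i q (α i) y ≠ 0 ↔ y ≠ 0 ∧ MulGenEq mul α i q := by
  rcases hdim q y with rfl | rfl
  · simp
  · simp [hα, mulGenEq_iff_ne_zero hα hdim]

variable (hassoc : ∀ (i j k : ℤ) (x : A i) (y : A j) (z : A k),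
  mul (i + j - n) k (mul i j x y) z = gcast (by ring) (mul i (j + k - n) x (mul j k y z)))
include hassoc

theorem mulGenEq_assoc_iff {i j k p q : ℤ} (hp : p = i + j - n) (hq : q = j + k - n) :
    MulGenEq mul α i j ∧ MulGenEq mul α p k ↔ MulGenEq mul α j k ∧ MulGenEq mul α i q := by
  subst hp hq
  calc MulGenEq mul α i j ∧ MulGenEq mul α (i + j - n) k
      ↔ mul (i + j - n) k (mul i j (α i) (α j)) (α k) ≠ 0 := by
        rw [mul_apply_gen_ne_zero_iff hα hdim, mulGenEq_iff_ne_zero hα hdim]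
    _ ↔ mul i (j + k - n) (α i) (mul j k (α j) (α k)) ≠ 0 := by
        rw [hassoc, ne_eq, gcast_eq_zero_iff]
    _ ↔ MulGenEq mul α j k ∧ MulGenEq mul α i (j + k - n) := by
        rw [mul_gen_apply_ne_zero_iff hα hdim, mulGenEq_iff_ne_zero hα hdim (i := j) (j := k)]

theorem MulGenEq.add_right {d i j : ℤ} (hd : ∀ m, MulGenEq mul α m (n + d))
    (h : MulGenEq mul α i j) : MulGenEq mul α i (j + d) :=
  ((mulGenEq_assoc_iff hα hdim hassoc rfl (by ring)).mp ⟨h, hd _⟩).2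

theorem mulGenEq_of_forall_right
    (hunit : ∀ m, MulGenEq mul α m n) (hup : ∀ m, MulGenEq mul α m (n + 1))
    (hdown : ∀ m, MulGenEq mul α m (n - 1)) (i j : ℤ) : MulGenEq mul α i j := by
  refine Int.inductionOn' j n (hunit i) (fun _ _ ih => ih.add_right hα hdim hassoc hup)
    fun _ _ ih => ?_
  have hdown' (m : ℤ) : MulGenEq mul α m (n + -1) := (hdown m).congr rfl (by ring)
  exact (ih.add_right hα hdim hassoc hdown').congr rfl (by ring)

end OneDimensional

end GradedGenerators

/-- let `QH = H ⊗ Λ` with all graded pieces `QH_i ≅ ℤ/2` (generator `α_i`),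
carrying an associative graded product of degree `-n` with unit `α_n`, such that
`α_{n-1} * α_{n-1} = α_{n-2}` and `α_{n-2}` is invertible.  Then `α_{n-1}` is invertible
and `α_i * α_j = α_{i+j-n}` for all `i, j ∈ ℤ`. -/
theorem statement_12 (n : ℤ)
    (A : ℤ → Type) [∀ i, AddCommGroup (A i)] [∀ i, Module (ZMod 2) (A i)]
    (α : ∀ i, A i) (hα : ∀ i, α i ≠ 0)
    (hdim : ∀ i, ∀ x : A i, x = 0 ∨ x = α i)
    (mul : ∀ i j, A i →ₗ[ZMod 2] A j →ₗ[ZMod 2] A (i + j - n))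
    (hassoc : ∀ (i j k : ℤ) (x : A i) (y : A j) (z : A k),
      mul (i + j - n) k (mul i j x y) z =
        gcast (by ring) (mul i (j + k - n) x (mul j k y z)))
    (hunitR : ∀ (i : ℤ) (x : A i), mul i n x (α n) = gcast (by ring) x)
    (hsq : mul (n - 1) (n - 1) (α (n - 1)) (α (n - 1)) = gcast (by ring) (α (n - 2)))
    (hinv : ∃ b : A (n + 2),
      mul (n - 2) (n + 2) (α (n - 2)) b = gcast (by ring) (α n) ∧
      mul (n + 2) (n - 2) b (α (n - 2)) = gcast (by ring) (α n)) :
    (∃ b : A (n + 1),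
      mul (n - 1) (n + 1) (α (n - 1)) b = gcast (by ring) (α n) ∧
      mul (n + 1) (n - 1) b (α (n - 1)) = gcast (by ring) (α n)) ∧
    (∀ i j : ℤ, mul i j (α i) (α j) = α (i + j - n)) := by
  have hunit (m : ℤ) : MulGenEq mul α m n := (hunitR m (α m)).trans (gcast_apply_section α _)
  have hsq' : MulGenEq mul α (n - 1) (n - 1) := hsq.trans (gcast_apply_section α _)
  obtain ⟨b, -, hb⟩ := hinv
  have hb_ne : b ≠ 0 := by
    rintro rfl
    exact hα n ((gcast_eq_zero_iff _ _).mp (by simpa using hb.symm))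
  obtain rfl := (hdim _ b).resolve_left hb_ne
  have hinv' : MulGenEq mul α (n + 2) (n - 2) := hb.trans (gcast_apply_section α _)
  have hup_down : MulGenEq mul α (n + 1) (n - 1) :=
    ((mulGenEq_assoc_iff hα hdim hassoc (i := n + 2) (j := n - 1) (k := n - 1) (p := n + 1)
      (q := n - 2) (by ring) (by ring)).mpr ⟨hsq', hinv'⟩).2
  have hright (m : ℤ) : MulGenEq mul α m (n + 1) ∧ MulGenEq mul α (m + 1) (n - 1) :=
    (mulGenEq_assoc_iff hα hdim hassoc (j := n + 1) (k := n - 1) (p := m + 1) (q := n) (by ring)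
      (by ring)).mpr ⟨hup_down, hunit m⟩
  have hall := mulGenEq_of_forall_right hα hdim hassoc hunit (fun m => (hright m).1)
    fun m => ((hright (m - 1)).2).congr (by ring) rfl
  refine ⟨⟨α (n + 1), ?_, ?_⟩, hall⟩
  · exact (hall _ _).trans (gcast_apply_section α _).symm
  · exact (hall _ _).trans (gcast_apply_section α _).symm
end
end

section
/- Let QH(Q) = H_*(Q;Z) ⊗ Z[t,t⁻¹] be the quantum homology of the complex n-dimensional quadric (deg t = -2n), with hyperplane class h, point class p, fundamental class u, satisfying h^{*j} = h^{∩j} for 0 ≤ j ≤ n-1, h^{*n} = 2p + 2u·t, h^{*(n+1)} = 4h·t, and p*p = u·t². Suppose n = 2k is even and the middle homology H_n(Q;Z) = Z·a ⊕ Z·b with h^{∩k} = a+b and classical intersection products a·b = [pt], a·a = b·b = 0 when k is odd (resp. a·b = 0, a·a = b·b = [pt] when k is even), and (a-b)*(a-b) = (-1)^k·2(p - u·t). Then h*a = h*b implies a*a = b*b, and: if k is odd then a*b = p and a*a = b*b = u·t; if k is even then a*a = b*b = p and a*b = u·t. -/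
/-- in the quantum homology `QH(Q) = H_*(Q;ℤ) ⊗ ℤ[t,t⁻¹]` of the complex
`n`-dimensional quadric (`n = 2k` even; a commutative ring with unit the fundamental
class `u = 1`, free over `ℤ`, so without additive torsion), with hyperplane class `h`,
point class `p`, and middle classes `a, b` with `h^{*k} = h^{∩k} = a + b`, subject to
`h^{*n} = 2p + 2ut`, `h^{*(n+1)} = 4ht`, `p*p = ut²` and
`(a-b)*(a-b) = (-1)^k·2(p - ut)`:  then `h*a = h*b` implies `a*a = b*b`, and if `k` is
odd then `a*b = p`, `a*a = b*b = ut`, while if `k` is even then `a*a = b*b = p`,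
`a*b = ut`. -/
theorem statement_16 (n k : ℕ) (hk : 1 ≤ k) (hn : n = 2 * k)
    (Q : Type) [CommRing Q]
    (htorsionfree : ∀ x : Q, 4 * x = 0 → x = 0)
    (h p a b : Q) (t : Qˣ)
    (hmid : h ^ k = a + b)
    (hhn : h ^ n = 2 * p + 2 * (t : Q))
    (hhn1 : h ^ (n + 1) = 4 * (h * (t : Q)))
    (hpp : p * p = ((t : Q)) ^ 2)
    (hab : (a - b) * (a - b) = (-1 : Q) ^ k * (2 * (p - (t : Q))))
    (hha : h * a = h * b) :
    a * a = b * b ∧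
    (Odd k → a * b = p ∧ a * a = (t : Q) ∧ b * b = (t : Q)) ∧
    (Even k → a * a = p ∧ b * b = p ∧ a * b = (t : Q)) := by
  obtain ⟨m, hm⟩ := Nat.exists_eq_add_of_le hk
  have hd : h * (a - b) = 0 := by rw [mul_sub, hha, sub_self]
  have h1 : (a + b) * (a - b) = 0 := by
    have e : (a + b) * (a - b) = h ^ m * (h * (a - b)) := by
      rw [← hmid, hm]; ring
    rw [e, hd, mul_zero]
  have hsq : a * a = b * b := sub_eq_zero.mp (by linear_combination h1)
  have hsum : (a + b) * (a + b) = 2 * p + 2 * (t : Q) := by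
    rw [← hmid, ← pow_add, ← two_mul, ← hn, hhn]
  have h4 : ∀ x y : Q, 4 * x = 4 * y → x = y := fun x y hxy =>
    sub_eq_zero.mp (htorsionfree _ (by linear_combination hxy))
  refine ⟨hsq, ?_, ?_⟩
  · intro hodd
    have hneg : (-1 : Q) ^ k = -1 := hodd.neg_one_pow
    have hab' : (a - b) * (a - b) = -(2 * (p - (t : Q))) := by rw [hab, hneg]; ring
    have haa : a * a = (t : Q) := h4 _ _ (by linear_combination hsum + hab' + 2 * hsq)
    exact ⟨h4 _ _ (by linear_combination hsum - hab'), haa, hsq.symm.trans haa⟩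
  · intro heven
    have hneg : (-1 : Q) ^ k = 1 := heven.neg_one_pow
    have hab' : (a - b) * (a - b) = 2 * (p - (t : Q)) := by rw [hab, hneg, one_mul]
    have haa : a * a = p := h4 _ _ (by linear_combination hsum + hab' + 2 * hsq)
    exact ⟨haa, hsq.symm.trans haa, h4 _ _ (by linear_combination hsum - hab')⟩
end

section
/- Let Λ = Z/2[t,t⁻¹] with deg t = -2n and let V be a graded Λ-module of the form V = H ⊗ Λ where H is a graded Z/2-vector space concentrated in degrees 0 through n with H₀ = Z/2. Suppose V is a module over a graded ring containing an invertible element a of degree n, so that a acts as degree -n isomorphisms V_i → V_{i-n} for all i ∈ Z. Then H_i = 0 for all 0 < i < n; i.e. H has the Z/2-homology of the n-sphere (H₀ = H_n = Z/2 if H_n ≠ 0). -/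
open DirectSum

noncomputable section

/-- the degree-`m` piece of `V = H ⊗ Λ` where `deg t = -(2n)`:
`V_m = ⊕_{q ∈ ℤ} H_{m + 2nq}`. -/
abbrev Vpiece (H : ℤ → Type) [∀ i, AddCommGroup (H i)] [∀ i, Module (ZMod 2) (H i)]
    (n m : ℤ) : Type _ :=
  ⨁ q : ℤ, H (m + q * (2 * n))

/-- let `Λ = ℤ/2[t,t⁻¹]` with `deg t = -2n`, and `V = H ⊗ Λ` with `H` a
graded `ℤ/2`-vector space concentrated in degrees `0,…,n` with `H₀ = ℤ/2`.  If `V` is a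
module over a graded ring containing an invertible element of degree `n`, so that there
are isomorphisms `V_i → V_{i-n}` for all `i ∈ ℤ`, then `H_i = 0` for all `0 < i < n`:
`H` has the `ℤ/2`-homology of the `n`-sphere. -/
theorem statement_17 (n : ℤ) (hn : 1 ≤ n)
    (H : ℤ → Type) [∀ i, AddCommGroup (H i)] [∀ i, Module (ZMod 2) (H i)]
    (hconc : ∀ i : ℤ, i < 0 ∨ n < i → ∀ x : H i, x = 0)
    (h0 : ∃ x : H 0, x ≠ 0)
    (e : ∀ m : ℤ, Vpiece H n m ≃ₗ[ZMod 2] Vpiece H n (m - n)) :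
    ∀ i : ℤ, 0 < i → i < n → ∀ x : H i, x = 0 := by

  intro i hi hin x
  -- `V_{i+n}` is trivial: every graded piece `H (i+n+2nq)` vanishes by concentration
  have hsub : Subsingleton (Vpiece H n (i + n)) := by
    constructor
    intro a b
    have hz : ∀ y : Vpiece H n (i + n), y = 0 := by
      intro y
      refine DFinsupp.ext fun q => ?_
      have hq : i + n + q * (2 * n) < 0 ∨ n < i + n + q * (2 * n) := by
        rcases le_or_gt 0 q with hq | hq
        · right
          nlinarith
        · left
          have hq1 : q ≤ -1 := by omega
          nlinarith
      exact hconc _ hq (y q)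
    rw [hz a, hz b]
  -- transfer via the isomorphism `V_{i+n} ≃ V_i`
  have hin' : i + n - n = i := by ring
  have g := e (i + n)
  rw [hin'] at g
  have hsub2 : Subsingleton (Vpiece H n i) := g.toEquiv.symm.subsingleton
  -- the degree-`i` component `H (i + 0 * (2n))` embeds in `V_i`
  have hsub3 : Subsingleton (H (i + 0 * (2 * n))) := by
    constructor
    intro a b
    have h1 : (DirectSum.of (fun q : ℤ => H (i + q * (2 * n))) 0 a : Vpiece H n i)
        = DirectSum.of (fun q : ℤ => H (i + q * (2 * n))) 0 b := Subsingleton.elim _ _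
    have h2 := DFunLike.congr_fun h1 (0 : ℤ)
    rwa [DirectSum.of_eq_same, DirectSum.of_eq_same] at h2
  have hidx : i + 0 * (2 * n) = i := by ring
  rw [hidx] at hsub3
  exact Subsingleton.elim x 0
end
end
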